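/- arXiv:2403.03927 — 2 statements merged into one kernel-verified Lean document; each statement's English description precedes it below -/
import Mathlib

section
/- Let G be a compact group, H a closed subgroup, V a finite-dimensional unitary G-module and W a finite-dimensional unitary H-module. Then the map t sending a G-equivariant bounded linear map A : V → Ind_H^G W to the linear map a : V → W defined by a(v) = A(v)(e) is a linear isomorphism Hom_G(V, Ind_H^G W) → Hom_H(Res_H^G V, W), with inverse a ↦ A where A(v)(g) = a(g⁻¹v). -/
open scoped InnerProductSpace

/-! A `G`-map `A` into functions on `G` is determined by its values at `e`, since
`A v g = A (g⁻¹v) e`. Conversely, the `H`-equivariance of `a` is exactly what makes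
`g ↦ a(g⁻¹v)` satisfy `f(gh) = h⁻¹ f(g)`, and continuity comes for free because `a` is a
linear map out of a finite-dimensional space. -/

namespace FrobeniusReciprocity

variable {k G V W : Type*} [CommSemiring k] [Group G]
  [AddCommMonoid V] [Module k V] [AddCommMonoid W] [Module k W]

theorem apply_eq_apply_one {ρ : Representation k G V} {A : V →ₗ[k] (G → W)}
    (hA : ∀ (g : G) (v : V), A (ρ g v) = fun g' : G => A v (g⁻¹ * g')) (v : V) (g : G) :
    A v g = A (ρ g⁻¹ v) 1 := by
  rw [hA]
  beta_reduce
  rw [inv_inv, mul_one]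

theorem apply_one_map_subgroup {H : Subgroup G} {ρ : Representation k G V}
    {σ : Representation k H W} {A : V →ₗ[k] (G → W)}
    (hA : ∀ (g : G) (v : V), A (ρ g v) = fun g' : G => A v (g⁻¹ * g'))
    (hInd : ∀ (v : V) (g : G) (h : H), A v (g * h) = σ h⁻¹ (A v g)) (h : H) (v : V) :
    A (ρ h v) 1 = σ h (A v 1) := by
  rw [hA]
  beta_reduce
  rw [mul_one, ← one_mul (h : G)⁻¹, ← Subgroup.coe_inv, hInd, inv_inv]

def lift (ρ : Representation k G V) (a : V →ₗ[k] W) : V →ₗ[k] (G → W) where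
  toFun v g := a (ρ g⁻¹ v)
  map_add' v v' := by ext g; simp
  map_smul' c v := by ext g; simp

@[simp]
theorem lift_apply (ρ : Representation k G V) (a : V →ₗ[k] W) (v : V) (g : G) :
    lift ρ a v g = a (ρ g⁻¹ v) :=
  rfl

theorem lift_apply_one (ρ : Representation k G V) (a : V →ₗ[k] W) (v : V) :
    lift ρ a v 1 = a v := by
  simp

theorem lift_map (ρ : Representation k G V) (a : V →ₗ[k] W) (g : G) (v : V) :
    lift ρ a (ρ g v) = fun g' : G => lift ρ a v (g⁻¹ * g') := by
  ext g'
  simp [Module.End.mul_apply]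

theorem lift_apply_mul_subgroup {H : Subgroup G} {ρ : Representation k G V}
    {σ : Representation k H W} {a : V →ₗ[k] W}
    (ha : ∀ (h : H) (v : V), a (ρ h v) = σ h (a v)) (v : V) (g : G) (h : H) :
    lift ρ a v (g * h) = σ h⁻¹ (lift ρ a v g) := by
  rw [lift_apply, lift_apply, mul_inv_rev, map_mul, Module.End.mul_apply, ← Subgroup.coe_inv, ha]

theorem continuous_lift_apply [TopologicalSpace G] [ContinuousInv G] [TopologicalSpace V]
    [TopologicalSpace W] {ρ : Representation k G V} (hρ : Continuous fun p : G × V => ρ p.1 p.2)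
    {a : V →ₗ[k] W} (ha : Continuous a) (v : V) : Continuous (lift ρ a v) :=
  ha.comp (hρ.comp (continuous_inv.prodMk continuous_const))

end FrobeniusReciprocity

open FrobeniusReciprocity in
/-- **unitary Frobenius reciprocity.** `G` a compact group, `H` a closed
subgroup, `V` a finite-dimensional unitary `G`-module, `W` a finite-dimensional unitary
`H`-module. `Ind_H^G W` is realized as the space of (continuous-vector representatives
of) functions `f : G → W` with `f(gh) = h⁻¹(f(g))`, with `G`-action `(g·f)(g′) = f(g⁻¹g′)`;
a `G`-map of the finite-dimensional `V` into the induced module automatically takes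
values in continuous vectors, so `Hom_G(V, Ind_H^G W)` is the set `SG` below, and
`Hom_H(Res_H^G V, W)` is the set `SH` below (boundedness being automatic in finite
dimensions). The map `t : A ↦ (v ↦ A(v)(e))` is a linear bijection from
`Hom_G(V, Ind_H^G W)` onto `Hom_H(Res_H^G V, W)`, with inverse `a ↦ (v ↦ (g ↦ a(g⁻¹v)))`. -/
theorem unitary_frobenius_reciprocity
    {G : Type*} [Group G] [TopologicalSpace G] [IsTopologicalGroup G]
    (H : Subgroup G)
    {V W : Type*} [NormedAddCommGroup V] [InnerProductSpace ℂ V] [FiniteDimensional ℂ V]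
    [NormedAddCommGroup W] [InnerProductSpace ℂ W]
    (ρ : Representation ℂ G V) (σ : Representation ℂ (↥H) W)
    (hρc : Continuous fun p : G × V => ρ p.1 p.2) :
    -- the induced module (continuous vectors)
    letI Ind : Set (G → W) :=
      {f | Continuous f ∧ ∀ (g : G) (h : ↥H), f (g * ↑h) = σ h⁻¹ (f g)}
    -- Hom_G(V, Ind_H^G W)
    letI SG : Set (V →ₗ[ℂ] (G → W)) :=
      {A | (∀ v : V, A v ∈ Ind) ∧
        ∀ (g : G) (v : V), A (ρ g v) = fun g' : G => A v (g⁻¹ * g')}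
    -- Hom_H(Res_H^G V, W)
    letI SH : Set (V →ₗ[ℂ] W) :=
      {a | ∀ (h : ↥H) (v : V), a (ρ (↑h) v) = σ h (a v)}
    -- evaluation at the identity e ∈ G
    letI T : (V →ₗ[ℂ] (G → W)) → (V →ₗ[ℂ] W) := fun A =>
      { toFun := fun v => A v 1
        map_add' := by intro v v'; simp
        map_smul' := by intro c v; simp }
    Set.BijOn T SG SH ∧
      (∀ A ∈ SG, ∀ (v : V) (g : G), A v g = T A (ρ g⁻¹ v)) := by
  refine ⟨⟨?mapsTo, ?injOn, ?surjOn⟩, fun A hA => apply_eq_apply_one hA.2⟩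
  case mapsTo =>
    exact fun A hA => apply_one_map_subgroup hA.2 fun v => (hA.1 v).2
  case injOn =>
    intro A hA A' hA' hT
    ext v g
    rw [apply_eq_apply_one hA.2, apply_eq_apply_one hA'.2]
    exact LinearMap.congr_fun hT (ρ g⁻¹ v)
  case surjOn =>
    intro a ha
    refine ⟨lift ρ a, ⟨fun v => ⟨?_, lift_apply_mul_subgroup ha v⟩, lift_map ρ a⟩, ?_⟩
    · exact continuous_lift_apply hρc a.continuous_of_finiteDimensional v
    · exact LinearMap.ext (lift_apply_one ρ a)
end

section
/- Let G be a diffeological group acting smoothly and principally (freely and strictly) on a diffeological space X₁, and acting smoothly on a diffeological space X₂. Then the diagonal G-action on X₁ × X₂ is principal. -/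
/-- A diffeology on `X` (plots with open domains, satisfying the usual axioms). -/
structure Diffeology' (X : Type*) where
  IsPlot : ∀ ⦃n : ℕ⦄, Set (Fin n → ℝ) → ((Fin n → ℝ) → X) → Prop
  isOpen_dom : ∀ {n : ℕ} {U : Set (Fin n → ℝ)} {p : (Fin n → ℝ) → X}, IsPlot U p → IsOpen U
  plot_const : ∀ {n : ℕ} {U : Set (Fin n → ℝ)}, IsOpen U → ∀ x : X, IsPlot U fun _ => x
  plot_comp :
    ∀ {m n : ℕ} {U : Set (Fin m → ℝ)} {V : Set (Fin n → ℝ)} {p : (Fin n → ℝ) → X}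
      (f : (Fin m → ℝ) → Fin n → ℝ), IsPlot V p → IsOpen U → ContDiffOn ℝ (⊤ : ℕ∞) f U →
      Set.MapsTo f U V → IsPlot U (p ∘ f)
  plot_locality :
    ∀ {n : ℕ} {U : Set (Fin n → ℝ)} {p : (Fin n → ℝ) → X}, IsOpen U →
      (∀ u ∈ U, ∃ V, IsOpen V ∧ u ∈ V ∧ V ⊆ U ∧ IsPlot V p) → IsPlot U p

/-- A map is smooth iff it sends plots to plots. -/
def Diffeology'.Smooth {X Y : Type*} (DX : Diffeology' X) (DY : Diffeology' Y) (f : X → Y) : Prop :=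
  ∀ {n : ℕ} {U : Set (Fin n → ℝ)} {p : (Fin n → ℝ) → X}, DX.IsPlot U p → DY.IsPlot U (f ∘ p)

/-- The product diffeology. -/
def Diffeology'.prod {X Y : Type*} (DX : Diffeology' X) (DY : Diffeology' Y) :
    Diffeology' (X × Y) where
  IsPlot _ U p := DX.IsPlot U (Prod.fst ∘ p) ∧ DY.IsPlot U (Prod.snd ∘ p)
  isOpen_dom h := DX.isOpen_dom h.1
  plot_const hU x := ⟨DX.plot_const hU x.1, DY.plot_const hU x.2⟩
  plot_comp f hp hU hf hmaps :=
    ⟨DX.plot_comp f hp.1 hU hf hmaps, DY.plot_comp f hp.2 hU hf hmaps⟩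
  plot_locality hU h :=
    ⟨DX.plot_locality hU fun u hu => by
        obtain ⟨V, h1, h2, h3, h4⟩ := h u hu; exact ⟨V, h1, h2, h3, h4.1⟩,
      DY.plot_locality hU fun u hu => by
        obtain ⟨V, h1, h2, h3, h4⟩ := h u hu; exact ⟨V, h1, h2, h3, h4.2⟩⟩

/-- Smoothness of a group action: the action map `G × X → X` is smooth for the
product diffeology. -/
def SmoothAction (G X : Type*) [Group G] [MulAction G X]
    (DG : Diffeology' G) (DX : Diffeology' X) : Prop :=
  (DG.prod DX).Smooth DX fun p : G × X => p.1 • p.2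

/-- Strictness of the action (the Bourbaki map `θ(g,x) = (x, g·x)` induces a
diffeomorphism onto its image), expressed in plots: every pair of plots `P, Q` with
values in the orbit-graph `{(x,y) : G(x) = G(y)}` locally admits a smooth division
map `R` into `G` with `Q = R·P`. -/
def StrictAction (G X : Type*) [Group G] [MulAction G X]
    (DG : Diffeology' G) (DX : Diffeology' X) : Prop :=
  ∀ {n : ℕ} {U : Set (Fin n → ℝ)} (P Q : (Fin n → ℝ) → X),
    DX.IsPlot U P → DX.IsPlot U Q → (∀ u ∈ U, ∃ g : G, g • P u = Q u) →
    ∀ u₀ ∈ U, ∃ V : Set (Fin n → ℝ), IsOpen V ∧ u₀ ∈ V ∧ V ⊆ U ∧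
      ∃ R : (Fin n → ℝ) → G, DG.IsPlot V R ∧ ∀ u ∈ V, Q u = R u • P u

/-- A free action. -/
def FreeAction (G X : Type*) [Group G] [MulAction G X] : Prop :=
  ∀ (g : G) (x : X), g • x = x → g = 1

/-- A principal action: free and strict. -/
def PrincipalAction (G X : Type*) [Group G] [MulAction G X]
    (DG : Diffeology' G) (DX : Diffeology' X) : Prop :=
  FreeAction G X ∧ StrictAction G X DG DX

/-- If a diffeological group `G` acts smoothly and principally on
`X₁` and smoothly on `X₂`, then the diagonal action on `X₁ × X₂` (with the product
diffeology) is principal. -/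
theorem principal_diagonal_action_of_principal
    {G X₁ X₂ : Type*} [Group G] [MulAction G X₁] [MulAction G X₂]
    (DG : Diffeology' G) (DX₁ : Diffeology' X₁) (DX₂ : Diffeology' X₂)
    (h₁ : SmoothAction G X₁ DG DX₁) (h₂ : SmoothAction G X₂ DG DX₂)
    (hp : PrincipalAction G X₁ DG DX₁) :
    PrincipalAction G (X₁ × X₂) DG (DX₁.prod DX₂) := by
  obtain ⟨hfree, hstrict⟩ := hp
  constructor
  · intro g x hx
    exact hfree g x.1 (congrArg Prod.fst hx)
  · intro n U P Q hP hQ horb u₀ hu₀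
    obtain ⟨V, hVopen, hu₀V, hVU, R, hR, hRdiv⟩ :=
      hstrict (Prod.fst ∘ P) (Prod.fst ∘ Q) hP.1 hQ.1
        (fun u hu => by
          obtain ⟨g, hg⟩ := horb u hu
          exact ⟨g, congrArg Prod.fst hg⟩) u₀ hu₀
    refine ⟨V, hVopen, hu₀V, hVU, R, hR, fun u hu => ?_⟩
    obtain ⟨g, hg⟩ := horb u (hVU hu)
    have h1 : g • (P u).1 = (Q u).1 := congrArg Prod.fst hg
    have h2 : R u • (P u).1 = (Q u).1 := (hRdiv u hu).symm
    have hgR : R u = g := inv_mul_eq_one.mp (hfree _ _ (by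
      rw [mul_smul, h1, ← h2, inv_smul_smul]))
    rw [hgR]
    exact hg.symm
end
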